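/- Let H be a real inner product space, and let l_m : H → ℝ and l_s : H → ℝ be everywhere differentiable functions such that the gradient of l_m is β-Lipschitz for some β > 0 and ‖∇l_s(θ)‖ ≤ G for all θ, where G > 0. Let ε > 0 and η = ε / (β G²). Then for every θ with ⟨∇l_m(θ), ∇l_s(θ)⟩ > ε, the test-time training step achieves a quantitative decrease of the main loss: l_m(θ) − l_m(θ − η ∇l_s(θ)) > ε² / (2 β G²). -/

import Mathlib

/-!
The descent lemma `f (x + v) ≤ f x + ⟪∇f x, v⟫ + K / 2 * ‖v‖ ^ 2` holds because
`t ↦ f (x + t • v) - t * ⟪∇f x, v⟫ - K / 2 * t ^ 2 * ‖v‖ ^ 2` is antitone on `[0, 1]`: its derivative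
`⟪∇f (x + t • v) - ∇f x, v⟫ - K * t * ‖v‖ ^ 2` is nonpositive by Cauchy–Schwarz and the Lipschitz
bound. For the step `v = -η • d` with `ε < ⟪∇f x, d⟫`, `‖d‖ ≤ G` and `η * K * G ^ 2 = ε`, the
decrease is therefore more than `η * ε - K / 2 * η ^ 2 * G ^ 2 = η * ε / 2 = ε ^ 2 / (2 * K * G ^ 2)`.
-/

open scoped RealInnerProductSpace NNReal

section DescentLemma

variable {H : Type*} [NormedAddCommGroup H] [InnerProductSpace ℝ H] {f : H → ℝ} {f' : H → H}

theorem HasGradientAt.hasDerivAt_comp_add_smul [CompleteSpace H] {x v : H} {t : ℝ}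
    (hf : HasGradientAt f (f' (x + t • v)) (x + t • v)) :
    HasDerivAt (fun s : ℝ => f (x + s • v)) ⟪f' (x + t • v), v⟫ t := by
  have hline : HasDerivAt (fun s : ℝ => x + s • v) v t := by
    simpa using ((hasDerivAt_id t).smul_const v).const_add x
  exact hf.hasFDerivAt.comp_hasDerivAt t hline

theorem inner_sub_le_of_lipschitzWith {K : ℝ≥0} (hlip : LipschitzWith K f') (x v : H)
    {t : ℝ} (ht : 0 ≤ t) :
    ⟪f' (x + t • v) - f' x, v⟫ ≤ K * t * ‖v‖ ^ 2 := by
  have hdist : ‖f' (x + t • v) - f' x‖ ≤ K * (t * ‖v‖) := by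
    simpa [dist_eq_norm, norm_smul, abs_of_nonneg ht] using hlip.dist_le_mul (x + t • v) x
  calc ⟪f' (x + t • v) - f' x, v⟫ ≤ ‖f' (x + t • v) - f' x‖ * ‖v‖ := real_inner_le_norm _ _
    _ ≤ K * (t * ‖v‖) * ‖v‖ := by gcongr
    _ = K * t * ‖v‖ ^ 2 := by ring

theorem le_add_inner_add_sq_of_lipschitzWith_gradient [CompleteSpace H] {K : ℝ≥0}
    (hf : ∀ x, HasGradientAt f (f' x) x) (hlip : LipschitzWith K f') (x v : H) :
    f (x + v) ≤ f x + ⟪f' x, v⟫ + K / 2 * ‖v‖ ^ 2 := by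
  set φ : ℝ → ℝ := fun t => f (x + t • v) - t * ⟪f' x, v⟫ - K / 2 * t ^ 2 * ‖v‖ ^ 2
  have hφ : ∀ t, HasDerivAt φ (⟪f' (x + t • v), v⟫ - ⟪f' x, v⟫ - K * t * ‖v‖ ^ 2) t := by
    intro t
    have hline := (hf (x + t • v)).hasDerivAt_comp_add_smul
    have hlin := (hasDerivAt_id t).mul_const ⟪f' x, v⟫
    have hquad := ((hasDerivAt_pow 2 t).const_mul (K / 2 : ℝ)).mul_const (‖v‖ ^ 2)
    refine ((hline.sub hlin).sub hquad).congr_deriv ?_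
    simp only [one_mul, Nat.cast_ofNat, Nat.add_one_sub_one, pow_one]
    ring
  have hanti : AntitoneOn φ (Set.Icc 0 1) := by
    refine antitoneOn_of_hasDerivWithinAt_nonpos (convex_Icc 0 1)
      (fun t _ => (hφ t).continuousAt.continuousWithinAt) (fun t _ => (hφ t).hasDerivWithinAt)
      fun t ht => ?_
    rw [interior_Icc] at ht
    have hgrowth := inner_sub_le_of_lipschitzWith hlip x v ht.1.le
    rw [inner_sub_left] at hgrowth
    linarith
  have hφ10 := hanti (by norm_num : (0 : ℝ) ∈ Set.Icc 0 1) (by norm_num : (1 : ℝ) ∈ Set.Icc 0 1)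
    zero_le_one
  simp only [φ] at hφ10
  norm_num at hφ10
  linarith

theorem lt_sub_apply_sub_smul_of_lipschitzWith_gradient [CompleteSpace H] {K : ℝ≥0} (hK : 0 < K)
    (hf : ∀ x, HasGradientAt f (f' x) x) (hlip : LipschitzWith K f') {x d : H} {G ε : ℝ}
    (hG : 0 < G) (hε : 0 < ε) (hd : ‖d‖ ≤ G) (hinner : ε < ⟪f' x, d⟫) :
    ε ^ 2 / (2 * K * G ^ 2) < f x - f (x - (ε / (K * G ^ 2)) • d) := by
  set η := ε / (K * G ^ 2)
  have hη : 0 < η := by positivity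
  have hηK : η * (K * G ^ 2) = ε := div_mul_cancel₀ ε (by positivity)
  clear_value η
  have hdescent := le_add_inner_add_sq_of_lipschitzWith_gradient hf hlip x (-(η • d))
  rw [← sub_eq_add_neg, inner_neg_right, inner_smul_right, norm_neg, norm_smul,
    Real.norm_of_nonneg hη.le] at hdescent
  have hstep : ε ^ 2 / (2 * K * G ^ 2) = η * ε / 2 := by
    rw [← hηK]; field_simp
  calc ε ^ 2 / (2 * K * G ^ 2) = η * ε - K / 2 * (η * G) ^ 2 := by
        rw [hstep]; linear_combination (η / 2) * hηK
    _ < η * ⟪f' x, d⟫ - K / 2 * (η * G) ^ 2 := by gcongr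
    _ ≤ η * ⟪f' x, d⟫ - K / 2 * (η * ‖d‖) ^ 2 := by gcongr
    _ ≤ f x - f (x - η • d) := by linarith

end DescentLemma

theorem lethean_stmt4_general
    {H : Type*} [NormedAddCommGroup H] [InnerProductSpace ℝ H] [CompleteSpace H]
    (lm : H → ℝ) (gm gs : H → H)
    (hgm : ∀ θ : H, HasGradientAt lm (gm θ) θ)
    (β : ℝ) (hβ : 0 < β)
    (hlip : LipschitzWith β.toNNReal gm)
    (G : ℝ) (hG : 0 < G)
    (hbs : ∀ θ : H, ‖gs θ‖ ≤ G)
    (ε : ℝ) (hε : 0 < ε)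
    (η : ℝ) (hη : η = ε / (β * G ^ 2)) :
    ∀ θ : H, ε < ⟪gm θ, gs θ⟫ →
      ε ^ 2 / (2 * β * G ^ 2) < lm θ - lm (θ - η • gs θ) := by
  intro θ hinner
  have hdecrease := lt_sub_apply_sub_smul_of_lipschitzWith_gradient
    (Real.toNNReal_pos.mpr hβ) hgm hlip hG hε (hbs θ) hinner
  rwa [Real.coe_toNNReal β hβ.le, ← hη] at hdecrease

/-- Quantitative form of the decrease in Theorem 1, with learning rate η = ε/(βG²):
the test-time training step decreases the main loss by more than ε²/(2βG²). -/
theorem lethean_stmt4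
    {H : Type*} [NormedAddCommGroup H] [InnerProductSpace ℝ H] [CompleteSpace H]
    (lm ls : H → ℝ) (gm gs : H → H)
    (hgm : ∀ θ : H, HasGradientAt lm (gm θ) θ)
    (hgs : ∀ θ : H, HasGradientAt ls (gs θ) θ)
    (β : ℝ) (hβ : 0 < β)
    (hlip : LipschitzWith β.toNNReal gm)
    (G : ℝ) (hG : 0 < G)
    (hbs : ∀ θ : H, ‖gs θ‖ ≤ G)
    (ε : ℝ) (hε : 0 < ε)
    (η : ℝ) (hη : η = ε / (β * G ^ 2)) :
    ∀ θ : H, ε < ⟪gm θ, gs θ⟫ →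
      ε ^ 2 / (2 * β * G ^ 2) < lm θ - lm (θ - η • gs θ) :=
  lethean_stmt4_general lm gm gs hgm β hβ hlip G hG hbs ε hε η hη
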